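/- arXiv:2311.02717 — 3 statements merged into one kernel-verified Lean document; each statement's English description precedes it below -/
import Mathlib

section
/- For any 0 < γ < 1 there exists δ = δ(γ) > 0 such that if f is any finite Blaschke product (fixing the origin) and z ∈ 𝔻 satisfies |f(z)| ≤ γ, then m(f(I(z))) ≥ δ. -/
open MeasureTheory Filter
open scoped Classical ENNReal Topology

noncomputable section

/-- The unit circle `∂𝔻 ⊆ ℂ`. -/
def uc : Set ℂ := {z : ℂ | ‖z‖ = 1}

/-- Parametrization of the unit circle by normalised arclength. -/
def pc (t : ℝ) : ℂ := Complex.exp (2 * Real.pi * Complex.I * t)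

/-- Normalised arclength measure on the unit circle, as a measure on `ℂ`. -/
def μc : Measure ℂ := Measure.map pc (volume.restrict (Set.Ico (0:ℝ) 1))

/-- Normalised length of a subset of the circle. -/
def mA (S : Set ℂ) : ℝ := (μc S).toReal

/-- Closed arc centered at `ξ` (a point of the circle) with normalised length `ℓ`
(the whole circle if `ℓ ≥ 1`). -/
def carc (ξ : ℂ) (ℓ : ℝ) : Set ℂ :=
  if 1 ≤ ℓ then uc
  else pc '' Set.Icc (Complex.arg ξ / (2 * Real.pi) - ℓ / 2)
                     (Complex.arg ξ / (2 * Real.pi) + ℓ / 2)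

/-- A (nondegenerate or degenerate) closed arc of the circle. -/
def IsClosedArc (I : Set ℂ) : Prop := ∃ ξ ∈ uc, ∃ ℓ : ℝ, 0 ≤ ℓ ∧ I = carc ξ ℓ

/-- The arc `I(z)`: centered at `z/|z|` with normalised length `1 - |z|`. -/
def Iarc (z : ℂ) : Set ℂ := if z = 0 then uc else carc (z / ‖z‖) (1 - ‖z‖)

/-- The arc `dI(z)`: concentric to `I(z)`, of length `min (d(1-|z|)) 1`. -/
def dIarc (d : ℕ) (z : ℂ) : Set ℂ := if z = 0 then uc else carc (z / ‖z‖) (d * (1 - ‖z‖))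

/-- Finite Blaschke product fixing the origin. -/
def IsFBP (f : ℂ → ℂ) : Prop :=
  ∃ (α : ℂ) (m J : ℕ) (zs : Fin J → ℂ),
    ‖α‖ = 1 ∧ 1 ≤ m ∧ (∀ j, ‖zs j‖ < 1) ∧
    ∀ w : ℂ, f w = α * w ^ m * ∏ j, (w - zs j) / (1 - (starRingEnd ℂ) (zs j) * w)

/-- Finite Blaschke product fixing the origin which is not a rotation (degree ≥ 2). -/
def IsFBPN (f : ℂ → ℂ) : Prop :=
  ∃ (α : ℂ) (m J : ℕ) (zs : Fin J → ℂ),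
    ‖α‖ = 1 ∧ 1 ≤ m ∧ 2 ≤ m + J ∧ (∀ j, ‖zs j‖ < 1) ∧
    ∀ w : ℂ, f w = α * w ^ m * ∏ j, (w - zs j) / (1 - (starRingEnd ℂ) (zs j) * w)

/-- Measure function: vanishing at `0`, strictly increasing, right-continuous. -/
def IsMeasureFunction (φ : ℝ → ℝ) : Prop :=
  φ 0 = 0 ∧ StrictMonoOn φ (Set.Ici 0) ∧
    ∀ t ∈ Set.Ici (0:ℝ), ContinuousWithinAt φ (Set.Ici t) t

/-- `φ`-Hausdorff measure on the circle, via countable covers by arcs. -/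
def Hmeas (φ : ℝ → ℝ) (E : Set ℂ) : ℝ≥0∞ :=
  ⨆ (δ : ℝ) (_ : 0 < δ),
    ⨅ (ξ : ℕ → ℂ) (ℓ : ℕ → ℝ) (_ : ∀ n, 0 ≤ ℓ n ∧ ℓ n < δ)
      (_ : E ⊆ ⋃ n, carc (ξ n) (ℓ n)),
      ∑' n, ENNReal.ofReal (φ (ℓ n))

/-- `min {|f'(ξ)| : ξ ∈ ∂𝔻}`. -/
def C0min (f : ℂ → ℂ) : ℝ := sInf ((fun ξ => ‖deriv f ξ‖) '' uc)

/-- Generalised inverse of `ψ(t) = φ(t)/t`: `ψ⁻¹(t) = inf {s > 0 : ψ(s) > t}`. -/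
def psiInv (φ : ℝ → ℝ) (t : ℝ) : ℝ := sInf {s : ℝ | 0 < s ∧ t < φ s / s}

/-- The set `A(w)` of boundary points where `∑ aₙ fⁿ` converges to `w`. -/
def Aset (f : ℂ → ℂ) (a : ℕ → ℂ) (w : ℂ) : Set ℂ :=
  {ξ : ℂ | ξ ∈ uc ∧
    Tendsto (fun L => ∑ n ∈ Finset.Icc 1 L, a n * (f^[n] ξ)) atTop (𝓝 w)}



set_option maxHeartbeats 1000000

lemma pc_norm (t : ℝ) : ‖pc t‖ = 1 := by
  simp [pc, Complex.norm_exp]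

lemma pc_ne_zero (t : ℝ) : pc t ≠ 0 := Complex.exp_ne_zero _

lemma pc_hasDerivAt (t : ℝ) : HasDerivAt pc (2*Real.pi*Complex.I * pc t) t := by
  have h1 : HasDerivAt (fun t : ℝ => (2 * Real.pi * Complex.I) * (t:ℂ)) (2*Real.pi*Complex.I) t := by
    simpa using (Complex.ofRealCLM.hasDerivAt (x := t)).const_mul (2 * Real.pi * Complex.I)
  have := h1.cexp
  convert this using 1
  · rfl
  simp only [pc]; ring

lemma pc_add_int (t : ℝ) (n : ℤ) : pc (t + n) = pc t := by
  unfold pc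
  rw [Complex.ofReal_add, mul_add, Complex.exp_add]
  have : Complex.exp (2 * Real.pi * Complex.I * (n:ℝ)) = 1 := by
    push_cast
    rw [show (2 : ℂ) * Real.pi * Complex.I * n = n * (2 * Real.pi * Complex.I) by ring]
    exact Complex.exp_int_mul_two_pi_mul_I n
  rw [this, mul_one]

lemma pc_lipschitz (s t : ℝ) : ‖pc s - pc t‖ ≤ 2 * Real.pi * |s - t| := by
  have h := Convex.norm_image_sub_le_of_norm_hasDerivWithin_le
    (f := pc) (f' := fun t => 2*Real.pi*Complex.I * pc t) (C := 2*Real.pi)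
    (fun x _ => (pc_hasDerivAt x).hasDerivWithinAt) ?_ (convex_univ) (Set.mem_univ t) (Set.mem_univ s)
  · simpa [abs_sub_comm, Real.dist_eq] using h
  · intro x _
    have : ‖pc x‖ = 1 := pc_norm x
    simp only [norm_mul, this]
    simp [abs_of_pos Real.pi_pos]

def Bf (w₀ w : ℂ) : ℂ := (w - w₀) / (1 - (starRingEnd ℂ) w₀ * w)
def Pk (w₀ : ℂ) (t : ℝ) : ℝ := (1 - ‖w₀‖^2) / ‖pc t - w₀‖^2

lemma pc_sub_ne {w₀ : ℂ} (hw : ‖w₀‖ < 1) (t : ℝ) : pc t - w₀ ≠ 0 := by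
  intro h
  rw [sub_eq_zero] at h
  have h2 : ‖pc t‖ = ‖w₀‖ := by rw [h]
  rw [pc_norm] at h2
  linarith

lemma den_key (w₀ : ℂ) (t : ℝ) :
    1 - (starRingEnd ℂ) w₀ * pc t = pc t * (starRingEnd ℂ) (pc t - w₀) := by
  have h : pc t * (starRingEnd ℂ) (pc t) = 1 := by
    rw [Complex.mul_conj']
    norm_cast
    simp [pc_norm]
  rw [map_sub, mul_sub, h]; ring

lemma den_ne {w₀ : ℂ} (hw : ‖w₀‖ < 1) (t : ℝ) : 1 - (starRingEnd ℂ) w₀ * pc t ≠ 0 := by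
  rw [den_key]
  exact mul_ne_zero (pc_ne_zero t)
    (by simp only [ne_eq, map_eq_zero]; exact pc_sub_ne hw t)

lemma Bf_ne {w₀ : ℂ} (hw : ‖w₀‖ < 1) (t : ℝ) : Bf w₀ (pc t) ≠ 0 :=
  div_ne_zero (pc_sub_ne hw t) (den_ne hw t)

lemma Bf_norm {w₀ : ℂ} (hw : ‖w₀‖ < 1) (t : ℝ) : ‖Bf w₀ (pc t)‖ = 1 := by
  rw [Bf, norm_div, den_key, norm_mul, pc_norm, one_mul, RCLike.norm_conj]
  exact div_self (by simpa using (norm_ne_zero_iff.mpr (pc_sub_ne hw t)))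

lemma Pk_pos {w₀ : ℂ} (hw : ‖w₀‖ < 1) (t : ℝ) : 0 < Pk w₀ t := by
  apply div_pos
  · nlinarith [norm_nonneg w₀]
  · have := norm_pos_iff.mpr (pc_sub_ne hw t)
    positivity

lemma Bf_hasDerivAt {w₀ : ℂ} (hw : ‖w₀‖ < 1) (t : ℝ) :
    HasDerivAt (fun s => Bf w₀ (pc s))
      (2*Real.pi*Complex.I * (Pk w₀ t : ℝ) * Bf w₀ (pc t)) t := by
  have hnum : HasDerivAt (fun s => pc s - w₀) (2*Real.pi*Complex.I * pc t) t :=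
    (pc_hasDerivAt t).sub_const w₀
  have hden : HasDerivAt (fun s => 1 - (starRingEnd ℂ) w₀ * pc s)
      (-((starRingEnd ℂ) w₀ * (2*Real.pi*Complex.I * pc t))) t := by
    simpa using (((pc_hasDerivAt t).const_mul ((starRingEnd ℂ) w₀)).const_sub 1)
  have h := hnum.div hden (den_ne hw t)
  convert h using 1
  · rfl
  · rfl
  have hd : pc t - w₀ ≠ 0 := pc_sub_ne hw t
  have hD : 1 - (starRingEnd ℂ) w₀ * pc t ≠ 0 := den_ne hw t
  have hcd : (starRingEnd ℂ) (pc t - w₀) ≠ 0 := by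
    simp only [ne_eq, map_eq_zero]; exact hd
  have hkey := den_key w₀ t
  have hns : ((‖pc t - w₀‖ : ℝ) : ℂ)^2 = (pc t - w₀) * (starRingEnd ℂ) (pc t - w₀) :=
    (Complex.mul_conj' _).symm
  have hw2 : ((‖w₀‖ : ℝ) : ℂ)^2 = (starRingEnd ℂ) w₀ * w₀ := by
    rw [mul_comm]; exact (Complex.mul_conj' _).symm
  have hnrm : ((‖pc t - w₀‖ : ℝ) : ℂ) ≠ 0 := by
    simpa using (norm_ne_zero_iff.mpr hd)
  set c := (starRingEnd ℂ) w₀ with hc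
  set d := pc t - w₀ with hdd
  set D := 1 - c * pc t with hDD
  set W := ((‖w₀‖ : ℝ) : ℂ)^2 with hW
  set S := ((‖pc t - w₀‖ : ℝ) : ℂ)^2 with hS
  have e1 : 2*Real.pi*Complex.I * pc t * D - d * -(c * (2*Real.pi*Complex.I * pc t))
      = 2*Real.pi*Complex.I * pc t * (1 - W) := by
    rw [hw2, hDD, hdd]; ring
  have key2 : pc t * S = d * D := by
    rw [hns, hkey]; ring
  rw [Bf, Pk, e1]
  push_cast
  rw [← hdd, ← hDD, ← hW, ← hS]
  have hS0 : S ≠ 0 := by rw [hS]; exact pow_ne_zero 2 hnrm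
  field_simp
  linear_combination (-(1-W)) * key2

lemma pc_continuous : Continuous pc := by
  unfold pc; fun_prop

lemma Pk_continuous {w₀ : ℂ} (hw : ‖w₀‖ < 1) : Continuous (Pk w₀) := by
  apply Continuous.div continuous_const
  · exact ((pc_continuous.sub continuous_const).norm).pow 2
  · intro t
    exact pow_ne_zero 2 (norm_ne_zero_iff.mpr (pc_sub_ne hw t))

lemma Bf_lift {w₀ : ℂ} (hw : ‖w₀‖ < 1) (a t : ℝ) :
    Bf w₀ (pc t) = Bf w₀ (pc a) *
      Complex.exp (2*Real.pi*Complex.I * ((∫ s in a..t, Pk w₀ s : ℝ) : ℂ)) := by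
  set R : ℝ → ℝ := fun u => ∫ s in a..u, Pk w₀ s with hR
  have hRd : ∀ u, HasDerivAt R (Pk w₀ u) u := fun u =>
    intervalIntegral.integral_hasDerivAt_right ((Pk_continuous hw).intervalIntegrable a u)
      ((Pk_continuous hw).stronglyMeasurableAtFilter _ _) (Pk_continuous hw).continuousAt
  have hE : ∀ u, HasDerivAt (fun v => Complex.exp (-(2*Real.pi*Complex.I * ((R v : ℝ) : ℂ))))
      (-(2*Real.pi*Complex.I * ((Pk w₀ u : ℝ) : ℂ)) *
        Complex.exp (-(2*Real.pi*Complex.I * ((R u : ℝ) : ℂ)))) u := by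
    intro u
    have h0 : HasDerivAt (fun v => ((R v : ℝ) : ℂ)) ((Pk w₀ u : ℝ) : ℂ) u :=
      (hRd u).ofReal_comp
    have h1 : HasDerivAt (fun v => -(2*Real.pi*Complex.I * ((R v : ℝ) : ℂ)))
        (-(2*Real.pi*Complex.I * ((Pk w₀ u : ℝ) : ℂ))) u := by
      exact (h0.const_mul (2*Real.pi*Complex.I)).neg
    simpa [mul_comm] using h1.cexp
  set F : ℝ → ℂ := fun u => Bf w₀ (pc u) *
    Complex.exp (-(2*Real.pi*Complex.I * ((R u : ℝ) : ℂ))) with hF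
  have hFd : ∀ u, HasDerivAt F 0 u := by
    intro u
    have := (Bf_hasDerivAt hw u).mul (hE u)
    convert this using 1
    · rfl
    · rfl
    ring
  have hconst : F t = F a :=
    is_const_of_deriv_eq_zero (fun u => (hFd u).differentiableAt)
      (fun u => (hFd u).deriv) t a
  have hRa : R a = 0 := intervalIntegral.integral_same
  rw [hF] at hconst
  simp only [hRa, Complex.ofReal_zero, mul_zero, neg_zero, Complex.exp_zero, mul_one] at hconst
  have hene : Complex.exp (-(2*Real.pi*Complex.I * ((R t : ℝ) : ℂ))) ≠ 0 := Complex.exp_ne_zero _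
  rw [Complex.exp_neg] at hconst
  field_simp at hconst
  rw [hconst, mul_comm]

lemma pc_add (s t : ℝ) : pc (s + t) = pc s * pc t := by
  unfold pc; rw [← Complex.exp_add]; push_cast; ring_nf

lemma pc_pow (t : ℝ) (m : ℕ) : (pc t)^m = Complex.exp (2*Real.pi*Complex.I * ((m : ℝ) * t : ℝ)) := by
  unfold pc; rw [← Complex.exp_nat_mul]; push_cast; ring_nf

lemma FBP_lift {J : ℕ} (α : ℂ) (m : ℕ) (zs : Fin J → ℂ) (hzs : ∀ j, ‖zs j‖ < 1) (a t : ℝ) :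
    α * (pc t)^m * ∏ j, Bf (zs j) (pc t) =
      (α * (pc a)^m * ∏ j, Bf (zs j) (pc a)) *
        Complex.exp (2*Real.pi*Complex.I *
          (((m : ℝ) * (t - a) + ∑ j, ∫ s in a..t, Pk (zs j) s : ℝ) : ℂ)) := by
  have hpow : (pc t)^m = (pc a)^m * Complex.exp (2*Real.pi*Complex.I * (((m:ℝ) * (t - a) : ℝ) : ℂ)) := by
    rw [pc_pow, pc_pow, ← Complex.exp_add]
    congr 1
    push_cast
    ring
  have hprod : ∏ j, Bf (zs j) (pc t) =
      (∏ j, Bf (zs j) (pc a)) *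
        Complex.exp (2*Real.pi*Complex.I * ((∑ j, ∫ s in a..t, Pk (zs j) s : ℝ) : ℂ)) := by
    calc ∏ j, Bf (zs j) (pc t)
        = ∏ j, (Bf (zs j) (pc a) *
            Complex.exp (2*Real.pi*Complex.I * ((∫ s in a..t, Pk (zs j) s : ℝ) : ℂ))) := by
          exact Finset.prod_congr rfl (fun j _ => Bf_lift (hzs j) a t)
      _ = (∏ j, Bf (zs j) (pc a)) *
            ∏ j, Complex.exp (2*Real.pi*Complex.I * ((∫ s in a..t, Pk (zs j) s : ℝ) : ℂ)) :=
          Finset.prod_mul_distrib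
      _ = (∏ j, Bf (zs j) (pc a)) *
            Complex.exp (∑ j, 2*Real.pi*Complex.I * ((∫ s in a..t, Pk (zs j) s : ℝ) : ℂ)) := by
          rw [Complex.exp_sum]
      _ = _ := by
          rw [← Finset.mul_sum]
          push_cast
          ring_nf
  rw [hpow, hprod]
  rw [show (2*Real.pi*Complex.I * (((m : ℝ) * (t - a) + ∑ j, ∫ s in a..t, Pk (zs j) s : ℝ) : ℂ))
      = 2*Real.pi*Complex.I * (((m:ℝ) * (t - a) : ℝ) : ℂ)
        + 2*Real.pi*Complex.I * ((∑ j, ∫ s in a..t, Pk (zs j) s : ℝ) : ℂ) by push_cast; ring,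
    Complex.exp_add]
  ring

lemma muc_apply {S : Set ℂ} (hS : MeasurableSet S) :
    μc S = volume (pc ⁻¹' S ∩ Set.Ico (0:ℝ) 1) := by
  rw [μc, Measure.map_apply pc_continuous.measurable hS,
    Measure.restrict_apply (pc_continuous.measurable hS)]

lemma muc_univ : μc Set.univ = 1 := by
  rw [muc_apply MeasurableSet.univ]
  simp [Real.volume_Ico]

lemma pc_image_shift (c d : ℝ) :
    pc '' Set.Icc c (c + d) = pc '' Set.Icc (Int.fract c) (Int.fract c + d) := by
  have h1 : Set.Icc c (c + d) = (fun x => x + (⌊c⌋ : ℝ)) '' Set.Icc (Int.fract c) (Int.fract c + d) := by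
    ext x
    simp only [Set.mem_image, Set.mem_Icc]
    constructor
    · intro hx
      refine ⟨x - ⌊c⌋, ⟨?_, ?_⟩, by ring⟩
      · rw [Int.fract]; linarith [hx.1]
      · rw [Int.fract]; linarith [hx.2]
    · rintro ⟨y, hy, rfl⟩
      rw [Int.fract] at hy
      exact ⟨by linarith [hy.1], by linarith [hy.2]⟩
  rw [h1, ← Set.image_comp]
  exact Set.image_congr (fun x _ => pc_add_int x ⌊c⌋)

lemma muc_arc_lower {c d : ℝ} (hc0 : 0 ≤ c) (hc1 : c < 1) (hd : 0 ≤ d) :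
    ENNReal.ofReal (min d 1) ≤ μc (pc '' Set.Icc c (c + d)) := by
  set S := pc '' Set.Icc c (c + d) with hSdef
  have hS : MeasurableSet S :=
    ((isCompact_Icc.image pc_continuous).isClosed).measurableSet
  rw [muc_apply hS]
  set T1 := Set.Ico c (min (c + d) 1) with hT1
  set T2 := Set.Ico (0:ℝ) (min c (c + d - 1)) with hT2
  have hT1sub : T1 ⊆ pc ⁻¹' S ∩ Set.Ico (0:ℝ) 1 := by
    rintro x ⟨hx1, hx2⟩
    refine ⟨⟨x, ⟨hx1, le_of_lt (lt_of_lt_of_le hx2 (min_le_left _ _))⟩, rfl⟩,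
      ⟨le_trans hc0 hx1, lt_of_lt_of_le hx2 (min_le_right _ _)⟩⟩
  have hT2sub : T2 ⊆ pc ⁻¹' S ∩ Set.Ico (0:ℝ) 1 := by
    rintro x ⟨hx1, hx2⟩
    have hxc : x < c := lt_of_lt_of_le hx2 (min_le_left _ _)
    have hxd : x < c + d - 1 := lt_of_lt_of_le hx2 (min_le_right _ _)
    refine ⟨⟨x + 1, ⟨by linarith, by linarith⟩, ?_⟩, ⟨hx1, by linarith⟩⟩
    have := pc_add_int x 1
    simpa using this
  have hdisj : Disjoint T1 T2 := by
    rw [Set.disjoint_left]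
    rintro x ⟨hx1, _⟩ ⟨_, hx2⟩
    exact absurd (lt_of_lt_of_le hx2 (min_le_left _ _)) (not_lt.mpr hx1)
  have hmono : volume (T1 ∪ T2) ≤ volume (pc ⁻¹' S ∩ Set.Ico (0:ℝ) 1) :=
    measure_mono (Set.union_subset hT1sub hT2sub)
  refine le_trans ?_ hmono
  rw [measure_union hdisj measurableSet_Ico, Real.volume_Ico, Real.volume_Ico]
  rcases le_or_gt (c + d) 1 with h1 | h1
  · have : min (c + d) 1 = c + d := min_eq_left h1
    rw [this]
    refine le_trans (ENNReal.ofReal_le_ofReal ?_) le_self_add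
    simp [min_le_left d 1]
  · have h2 : min (c + d) 1 = 1 := min_eq_right (le_of_lt h1)
    rw [h2]
    have hmn : (0:ℝ) ≤ min c (c + d - 1) := le_min hc0 (by linarith)
    rw [sub_zero, ← ENNReal.ofReal_add (by linarith : (0:ℝ) ≤ 1 - c) hmn]
    apply ENNReal.ofReal_le_ofReal
    rcases le_total c (c + d - 1) with h3 | h3
    · rw [min_eq_left h3]
      have : min d 1 ≤ 1 := min_le_right _ _
      linarith
    · rw [min_eq_right h3]
      have : min d 1 ≤ d := min_le_left _ _
      linarith

lemma muc_arc_lower' (c : ℝ) {d : ℝ} (hd : 0 ≤ d) :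
    ENNReal.ofReal (min d 1) ≤ μc (pc '' Set.Icc c (c + d)) := by
  rw [pc_image_shift]
  exact muc_arc_lower (Int.fract_nonneg c) (Int.fract_lt_one c) hd

lemma mA_lower {T : Set ℂ} {c d : ℝ} (hd : 0 ≤ d)
    (hsub : pc '' Set.Icc c (c + d) ⊆ T) : min d 1 ≤ mA T := by
  have h1 : ENNReal.ofReal (min d 1) ≤ μc T :=
    le_trans (muc_arc_lower' c hd) (measure_mono hsub)
  have h2 : μc T ≤ 1 := by
    have := measure_mono (Set.subset_univ T) (μ := μc)
    rwa [muc_univ] at this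
  have h3 : μc T ≠ ⊤ := ne_top_of_le_ne_top ENNReal.one_ne_top h2
  have := ENNReal.toReal_mono h3 h1
  rwa [ENNReal.toReal_ofReal (le_min (by linarith) zero_le_one)] at this

lemma norm_sq_identity (w z : ℂ) :
    ‖1 - (starRingEnd ℂ) w * z‖^2 = ‖z - w‖^2 + (1 - ‖z‖^2) * (1 - ‖w‖^2) := by
  have h : ∀ x : ℂ, ‖x‖^2 = Complex.normSq x := fun x => by
    rw [Complex.sq_norm]
  simp only [h, Complex.normSq_apply, Complex.sub_re, Complex.sub_im, Complex.mul_re,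
    Complex.mul_im, Complex.one_re, Complex.one_im, Complex.conj_re, Complex.conj_im]
  ring

lemma den_z_ne {w z : ℂ} (hw : ‖w‖ < 1) (hz : ‖z‖ < 1) :
    1 - (starRingEnd ℂ) w * z ≠ 0 := by
  intro h
  have h2 : (1:ℂ) = (starRingEnd ℂ) w * z := by linear_combination h
  have h3 : (1:ℝ) = ‖(starRingEnd ℂ) w * z‖ := by rw [← h2]; simp
  rw [norm_mul, RCLike.norm_conj] at h3
  nlinarith [norm_nonneg w, norm_nonneg z]

lemma Bf_one_sub_sq {w z : ℂ} (hw : ‖w‖ < 1) (hz : ‖z‖ < 1) :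
    1 - ‖Bf w z‖^2 = (1 - ‖z‖^2) * (1 - ‖w‖^2) / ‖1 - (starRingEnd ℂ) w * z‖^2 := by
  have hden := den_z_ne hw hz
  have hden2 : (0:ℝ) < ‖1 - (starRingEnd ℂ) w * z‖^2 :=
    pow_pos (norm_pos_iff.mpr hden) 2
  rw [Bf, norm_div, div_pow, one_sub_div (ne_of_gt hden2), norm_sq_identity]
  congr 1
  ring

lemma Bf_le_one {w z : ℂ} (hw : ‖w‖ < 1) (hz : ‖z‖ < 1) : ‖Bf w z‖ ≤ 1 := by
  have h := Bf_one_sub_sq hw hz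
  have hden2 : (0:ℝ) < ‖1 - (starRingEnd ℂ) w * z‖^2 :=
    pow_pos (norm_pos_iff.mpr (den_z_ne hw hz)) 2
  have hpos : 0 ≤ 1 - ‖Bf w z‖^2 := by
    rw [h]
    apply div_nonneg _ (le_of_lt hden2)
    apply mul_nonneg <;> nlinarith [norm_nonneg z, norm_nonneg w]
  nlinarith [norm_nonneg (Bf w z)]

lemma norm_sub_le_one_sub {w z : ℂ} : ‖z - w‖^2 ≤ ‖1 - (starRingEnd ℂ) w * z‖^2 ∨ True := Or.inr trivial

lemma Pk_lower {w z : ℂ} (hw : ‖w‖ < 1) (hz1 : ‖z‖ < 1) (hz0 : z ≠ 0) {t : ℝ}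
    (ht : |t - Complex.arg (z / ‖z‖) / (2 * Real.pi)| ≤ (1 - ‖z‖) / 2) :
    (1 - ‖Bf w z‖^2) / (72 * (1 - ‖z‖)) ≤ Pk w t := by
  set ℓ := 1 - ‖z‖ with hℓ
  have hℓpos : 0 < ℓ := by rw [hℓ]; linarith
  set ζ := z / ‖z‖ with hζdef
  have hz0' : ‖z‖ ≠ 0 := norm_ne_zero_iff.mpr hz0
  have hcast : ‖((‖z‖ : ℝ) : ℂ)‖ = ‖z‖ := by
    rw [Complex.norm_real, Real.norm_eq_abs, abs_norm]
  have hζnorm : ‖ζ‖ = 1 := by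
    rw [hζdef, norm_div, hcast, div_self hz0']
  have hpcarg : pc (Complex.arg ζ / (2 * Real.pi)) = ζ := by
    have h1 : 2 * (Real.pi:ℂ) * Complex.I * ((Complex.arg ζ / (2 * Real.pi) : ℝ) : ℂ)
        = (Complex.arg ζ : ℂ) * Complex.I := by
      push_cast
      field_simp [Real.pi_ne_zero]
    rw [pc, h1]
    have := Complex.norm_mul_exp_arg_mul_I ζ
    rw [hζnorm] at this
    simpa using this
  have hd1 : ‖pc t - ζ‖ ≤ 4 * ℓ := by
    calc ‖pc t - ζ‖ = ‖pc t - pc (Complex.arg ζ / (2 * Real.pi))‖ := by rw [hpcarg]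
      _ ≤ 2 * Real.pi * |t - Complex.arg ζ / (2 * Real.pi)| := pc_lipschitz _ _
      _ ≤ 2 * Real.pi * (ℓ / 2) := by
          apply mul_le_mul_of_nonneg_left ht (by positivity)
      _ ≤ 4 * ℓ := by nlinarith [Real.pi_le_four, hℓpos]
  have hd2 : ‖ζ - z‖ = ℓ := by
    have hz0c : ((‖z‖:ℝ):ℂ) ≠ 0 := Complex.ofReal_ne_zero.mpr hz0'
    have : ζ - z = z * ((1 : ℂ) - ‖z‖) / ‖z‖ := by
      rw [hζdef, mul_sub, mul_one, sub_div, mul_div_assoc, div_self hz0c, mul_one]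
    rw [this, norm_div, norm_mul]
    have h1 : ‖(1:ℂ) - (‖z‖ : ℂ)‖ = 1 - ‖z‖ := by
      rw [show (1:ℂ) - (‖z‖:ℂ) = ((1 - ‖z‖ : ℝ) : ℂ) by push_cast; ring,
        Complex.norm_real, Real.norm_eq_abs]
      exact abs_of_pos hℓpos
    rw [h1, hcast, mul_comm, mul_div_assoc, div_self hz0', mul_one]
  have hd3 : ‖z - w‖ ≤ ‖1 - (starRingEnd ℂ) w * z‖ := by
    have h := norm_sq_identity w z
    have hp : 0 < (1 - ‖z‖^2) * (1 - ‖w‖^2) := by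
      apply mul_pos <;> nlinarith [norm_nonneg z, norm_nonneg w]
    have hsq : ‖z - w‖^2 ≤ ‖1 - (starRingEnd ℂ) w * z‖^2 := by linarith
    exact (pow_le_pow_iff_left₀ (norm_nonneg _) (norm_nonneg _) two_ne_zero).mp hsq
  have hd4 : ℓ ≤ ‖1 - (starRingEnd ℂ) w * z‖ := by
    have h1 : ‖(1:ℂ)‖ - ‖(starRingEnd ℂ) w * z‖ ≤ ‖1 - (starRingEnd ℂ) w * z‖ :=
      norm_sub_norm_le _ _
    rw [norm_one, norm_mul, RCLike.norm_conj] at h1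
    have : ‖w‖ * ‖z‖ ≤ ‖z‖ := by nlinarith [norm_nonneg z, norm_nonneg w]
    rw [hℓ]; linarith
  have htot : ‖pc t - w‖ ≤ 6 * ‖1 - (starRingEnd ℂ) w * z‖ := by
    calc ‖pc t - w‖ ≤ ‖pc t - ζ‖ + ‖ζ - z‖ + ‖z - w‖ := by
          have h1 := norm_sub_le_norm_sub_add_norm_sub (pc t) ζ w
          have h2 := norm_sub_le_norm_sub_add_norm_sub ζ z w
          linarith
      _ ≤ 4*ℓ + ℓ + ‖1 - (starRingEnd ℂ) w * z‖ := by
          rw [hd2]; exact add_le_add (add_le_add hd1 le_rfl) hd3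
      _ ≤ 6 * ‖1 - (starRingEnd ℂ) w * z‖ := by linarith
  have hBf := Bf_one_sub_sq hw hz1
  have hden2 : (0:ℝ) < ‖1 - (starRingEnd ℂ) w * z‖^2 :=
    pow_pos (norm_pos_iff.mpr (den_z_ne hw hz1)) 2
  have hpcw : (0:ℝ) < ‖pc t - w‖^2 := pow_pos (norm_pos_iff.mpr (pc_sub_ne hw t)) 2
  rw [Pk, div_le_div_iff₀ (by nlinarith [hℓpos] : (0:ℝ) < 72 * (1 - ‖z‖)) hpcw]
  have hE1 : (1 - ‖Bf w z‖^2) * ‖1 - (starRingEnd ℂ) w * z‖^2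
      = (1 - ‖z‖^2) * (1 - ‖w‖^2) := by
    rw [hBf, div_mul_cancel₀ _ (ne_of_gt hden2)]
  have h36 : ‖pc t - w‖^2 ≤ 36 * ‖1 - (starRingEnd ℂ) w * z‖^2 := by
    nlinarith [mul_self_le_mul_self (norm_nonneg (pc t - w)) htot,
      norm_nonneg (pc t - w), norm_nonneg (1 - (starRingEnd ℂ) w * z)]
  have hw2pos : (0:ℝ) < 1 - ‖w‖^2 := by nlinarith [norm_nonneg w]
  have hBf1 : 0 ≤ 1 - ‖Bf w z‖^2 := by
    rw [hBf]
    exact div_nonneg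
      (mul_nonneg (by nlinarith [norm_nonneg z]) (by nlinarith [norm_nonneg w]))
      (le_of_lt hden2)
  have hz2 : 1 - ‖z‖^2 ≤ 2 * ℓ := by rw [hℓ]; nlinarith [norm_nonneg z]
  have s1 : (1 - ‖Bf w z‖^2) * ‖pc t - w‖^2
      ≤ (1 - ‖Bf w z‖^2) * (36 * ‖1 - (starRingEnd ℂ) w * z‖^2) :=
    mul_le_mul_of_nonneg_left h36 hBf1
  have s2 : (1 - ‖Bf w z‖^2) * (36 * ‖1 - (starRingEnd ℂ) w * z‖^2)
      = 36 * ((1 - ‖z‖^2) * (1 - ‖w‖^2)) := by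
    rw [show (1 - ‖Bf w z‖^2) * (36 * ‖1 - (starRingEnd ℂ) w * z‖^2)
      = 36 * ((1 - ‖Bf w z‖^2) * ‖1 - (starRingEnd ℂ) w * z‖^2) by ring, hE1]
  have s3 : (1 - ‖z‖^2) * (1 - ‖w‖^2) ≤ (2 * ℓ) * (1 - ‖w‖^2) :=
    mul_le_mul_of_nonneg_right hz2 (le_of_lt hw2pos)
  nlinarith [s1, s2, s3]

lemma one_sub_prod_le {ι : Type*} (s : Finset ι) (g : ι → ℝ) (h0 : ∀ i ∈ s, 0 ≤ g i)
    (h1 : ∀ i ∈ s, g i ≤ 1) : 1 - ∏ i ∈ s, g i ≤ ∑ i ∈ s, (1 - g i) := by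
  classical
  induction s using Finset.induction with
  | empty => simp
  | @insert a s ha ih =>
    rw [Finset.prod_insert ha, Finset.sum_insert ha]
    have hP0 : 0 ≤ ∏ i ∈ s, g i :=
      Finset.prod_nonneg (fun i hi => h0 i (Finset.mem_insert_of_mem hi))
    have hP1 : ∏ i ∈ s, g i ≤ 1 :=
      Finset.prod_le_one (fun i hi => h0 i (Finset.mem_insert_of_mem hi))
        (fun i hi => h1 i (Finset.mem_insert_of_mem hi))
    have hga0 : 0 ≤ g a := h0 a (Finset.mem_insert_self a s)
    have hga1 : g a ≤ 1 := h1 a (Finset.mem_insert_self a s)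
    have ih' := ih (fun i hi => h0 i (Finset.mem_insert_of_mem hi))
      (fun i hi => h1 i (Finset.mem_insert_of_mem hi))
    nlinarith

lemma pow_bound {x : ℝ} (hx0 : 0 ≤ x) (m : ℕ) : 1 - x^m ≤ m * (1-x) := by
  have h := one_add_mul_le_pow (by linarith : (-2:ℝ) ≤ x - 1) m
  have h2 : (1:ℝ) + (x-1) = x := by ring
  rw [h2] at h
  nlinarith

lemma sum_lower {J : ℕ} (m : ℕ) (zs : Fin J → ℂ) (z : ℂ) (hzs : ∀ j, ‖zs j‖ < 1)
    (hz : ‖z‖ < 1) :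
    1 - (‖z‖^m * ∏ j, ‖Bf (zs j) z‖)^2
      ≤ m * (1 - ‖z‖^2) + ∑ j, (1 - ‖Bf (zs j) z‖^2) := by
  have hA : (‖z‖^m * ∏ j, ‖Bf (zs j) z‖)^2 = (‖z‖^2)^m * ∏ j, ‖Bf (zs j) z‖^2 := by
    rw [mul_pow, ← Finset.prod_pow, ← pow_mul, ← pow_mul, Nat.mul_comm]
  rw [hA]
  set A := (‖z‖^2)^m with hAdef
  set B := ∏ j, ‖Bf (zs j) z‖^2 with hBdef
  have hA0 : 0 ≤ A := by positivity
  have hA1 : A ≤ 1 := pow_le_one₀ (by positivity) (by nlinarith [norm_nonneg z])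
  have hB0 : 0 ≤ B := Finset.prod_nonneg (fun j _ => by positivity)
  have hB1 : B ≤ 1 := Finset.prod_le_one (fun j _ => by positivity)
    (fun j _ => by nlinarith [Bf_le_one (hzs j) hz, norm_nonneg (Bf (zs j) z)])
  have h1 : 1 - A * B ≤ (1 - A) + (1 - B) := by nlinarith
  have h2 : 1 - A ≤ m * (1 - ‖z‖^2) := pow_bound (by positivity) m
  have h3 : 1 - B ≤ ∑ j, (1 - ‖Bf (zs j) z‖^2) :=
    one_sub_prod_le _ _ (fun j _ => by positivity)
      (fun j _ => by nlinarith [Bf_le_one (hzs j) hz, norm_nonneg (Bf (zs j) z)])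
  linarith

lemma image_lower {f : ℂ → ℂ} {J : ℕ} (α : ℂ) (m : ℕ) (zs : Fin J → ℂ)
    (hα : ‖α‖ = 1) (hzs : ∀ j, ‖zs j‖ < 1)
    (hf' : ∀ w, f w = α * w ^ m * ∏ j, Bf (zs j) w)
    (a b : ℝ) (hab : a ≤ b)
    {T : Set ℂ} (hT : f '' (pc '' Set.Icc a b) ⊆ T) :
    min ((m : ℝ) * (b - a) + ∑ j, ∫ s in a..b, Pk (zs j) s) 1 ≤ mA T := by
  set G : ℝ → ℝ := fun t => (m : ℝ) * (t - a) + ∑ j, ∫ s in a..t, Pk (zs j) s with hG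
  have hGcont : Continuous G := by
    apply Continuous.add
    · exact continuous_const.mul (continuous_id.sub continuous_const)
    · apply continuous_finset_sum
      intro j _
      have hD : ∀ u : ℝ, HasDerivAt (fun v => ∫ s in a..v, Pk (zs j) s) (Pk (zs j) u) u :=
        fun u => intervalIntegral.integral_hasDerivAt_right
          ((Pk_continuous (hzs j)).intervalIntegrable a u)
          ((Pk_continuous (hzs j)).stronglyMeasurableAtFilter _ _)
          (Pk_continuous (hzs j)).continuousAt
      exact continuous_iff_continuousAt.mpr (fun u => (hD u).continuousAt)
  have hGa : G a = 0 := by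
    simp [hG, intervalIntegral.integral_same]
  have hGb0 : 0 ≤ G b := by
    rw [hG]
    have h1 : ∀ j : Fin J, 0 ≤ ∫ s in a..b, Pk (zs j) s := fun j =>
      intervalIntegral.integral_nonneg hab (fun u _ => le_of_lt (Pk_pos (hzs j) u))
    have h2 : 0 ≤ ∑ j, ∫ s in a..b, Pk (zs j) s := Finset.sum_nonneg (fun j _ => h1 j)
    have h3 : (0:ℝ) ≤ (m:ℝ) * (b - a) := mul_nonneg (Nat.cast_nonneg m) (by linarith)
    simpa using add_nonneg h3 h2
  have hfpa : ‖f (pc a)‖ = 1 := by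
    rw [hf' (pc a), norm_mul, norm_mul, norm_pow, hα, pc_norm, one_mul, one_pow, one_mul,
      norm_prod]
    exact Finset.prod_eq_one (fun j _ => Bf_norm (hzs j) a)
  set c₀ : ℝ := Complex.arg (f (pc a)) / (2 * Real.pi) with hc₀
  have hpcc₀ : pc c₀ = f (pc a) := by
    have h1 : 2 * (Real.pi:ℂ) * Complex.I * ((c₀ : ℝ) : ℂ)
        = (Complex.arg (f (pc a)) : ℂ) * Complex.I := by
      rw [hc₀]
      push_cast
      field_simp [Real.pi_ne_zero]
    rw [pc, h1]
    have h2 := Complex.norm_mul_exp_arg_mul_I (f (pc a))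
    rw [hfpa] at h2
    simpa using h2
  have hfpc : ∀ t : ℝ, f (pc t) = pc (c₀ + G t) := by
    intro t
    rw [hf' (pc t), FBP_lift α m zs hzs a t, ← hf' (pc a), pc_add, hpcc₀]
    rfl
  have hsub : pc '' Set.Icc c₀ (c₀ + G b) ⊆ T := by
    intro x hx
    obtain ⟨y, hy, rfl⟩ := hx
    have h1 : y - c₀ ∈ Set.Icc (G a) (G b) := by
      rw [hGa]
      exact ⟨by linarith [hy.1], by linarith [hy.2]⟩
    obtain ⟨t, ht, hGt⟩ := intermediate_value_Icc hab hGcont.continuousOn h1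
    apply hT
    refine ⟨pc t, ⟨t, ht, rfl⟩, ?_⟩
    rw [hfpc t, hGt]
    congr 1
    ring
  exact mA_lower hGb0 hsub

/-- interior to boundary, Donaire–Nicolau Lemma 2.4 (a). -/
theorem interior_to_boundary (γ : ℝ) (hγ0 : 0 < γ) (hγ1 : γ < 1) :
    ∃ δ : ℝ, 0 < δ ∧
      ∀ f : ℂ → ℂ, IsFBP f → ∀ z : ℂ, ‖z‖ < 1 → ‖f z‖ ≤ γ →
        δ ≤ mA (f '' Iarc z) := by
  refine ⟨(1-γ)/72, by linarith, ?_⟩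
  intro f hf z hz hfγ
  obtain ⟨α, m, J, zs, hα, hm, hzs, hf⟩ := hf
  have hf' : ∀ w, f w = α * w ^ m * ∏ j, Bf (zs j) w := fun w => hf w
  have hδ1 : (1-γ)/72 ≤ 1 := by linarith
  by_cases hz0 : z = 0
  · subst hz0
    have hsub : f '' (pc '' Set.Icc 0 1) ⊆ f '' Iarc 0 := by
      apply Set.image_mono
      rintro x ⟨t, _, rfl⟩
      simp only [Iarc, if_pos rfl]
      exact pc_norm t
    have h := image_lower α m zs hα hzs hf' 0 1 zero_le_one hsub
    have hGb1 : 1 ≤ (m:ℝ) * (1 - 0) + ∑ j, ∫ s in (0:ℝ)..1, Pk (zs j) s := by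
      have h1 : 0 ≤ ∑ j, ∫ s in (0:ℝ)..1, Pk (zs j) s :=
        Finset.sum_nonneg (fun j _ => intervalIntegral.integral_nonneg zero_le_one
          (fun u _ => le_of_lt (Pk_pos (hzs j) u)))
      have h2 : (1:ℝ) ≤ (m:ℝ) := by exact_mod_cast hm
      linarith
    rw [min_eq_right (by linarith)] at h
    linarith
  · have hznorm : 0 < ‖z‖ := norm_pos_iff.mpr hz0
    set ℓ := 1 - ‖z‖ with hℓ
    have hℓ0 : 0 < ℓ := by rw [hℓ]; linarith
    have hℓ1 : ℓ < 1 := by rw [hℓ]; linarith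
    set cg := Complex.arg (z / ‖z‖) / (2 * Real.pi) with hcg
    set a := cg - ℓ/2 with ha
    set b := cg + ℓ/2 with hb
    have hab : a ≤ b := by rw [ha, hb]; linarith
    have hba : b - a = ℓ := by rw [ha, hb]; ring
    have hIarc : Iarc z = pc '' Set.Icc a b := by
      rw [Iarc, if_neg hz0, carc, if_neg (by linarith : ¬ (1:ℝ) ≤ 1 - ‖z‖)]
    have hT : f '' (pc '' Set.Icc a b) ⊆ f '' Iarc z := by
      rw [hIarc]
    have h := image_lower α m zs hα hzs hf' a b hab hT
    have hfz : ‖f z‖ = ‖z‖^m * ∏ j, ‖Bf (zs j) z‖ := by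
      rw [hf' z, norm_mul, norm_mul, norm_pow, hα, one_mul, norm_prod]
    have hγ2 : 1 - γ^2 ≤ 1 - ‖f z‖^2 := by nlinarith [norm_nonneg (f z)]
    have hBsum := sum_lower m zs z hzs hz
    have hint : ∀ j : Fin J, (1 - ‖Bf (zs j) z‖^2)/72 ≤ ∫ s in a..b, Pk (zs j) s := by
      intro j
      have hpt : ∀ x ∈ Set.Icc a b,
          (1 - ‖Bf (zs j) z‖^2) / (72 * (1 - ‖z‖)) ≤ Pk (zs j) x := by
        intro x hx
        apply Pk_lower (hzs j) hz hz0
        rw [abs_le]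
        constructor
        · have := hx.1; rw [ha] at this
          simp only [← hcg]
          linarith
        · have := hx.2; rw [hb] at this
          simp only [← hcg]
          linarith
      have hmono := intervalIntegral.integral_mono_on hab
        (intervalIntegrable_const (μ := volume)) ((Pk_continuous (hzs j)).intervalIntegrable a b) hpt
      rw [intervalIntegral.integral_const, smul_eq_mul, hba] at hmono
      have heq : ℓ * ((1 - ‖Bf (zs j) z‖^2) / (72 * (1 - ‖z‖)))
          = (1 - ‖Bf (zs j) z‖^2)/72 := by
        have hne : (1:ℝ) - ‖z‖ ≠ 0 := ne_of_gt (by linarith : (0:ℝ) < 1 - ‖z‖)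
        rw [hℓ]
        field_simp
      rw [heq] at hmono
      exact hmono
    have hsum : ∑ j, (1 - ‖Bf (zs j) z‖^2)/72 ≤ ∑ j, ∫ s in a..b, Pk (zs j) s :=
      Finset.sum_le_sum (fun j _ => hint j)
    have hz2 : 1 - ‖z‖^2 ≤ 2*ℓ := by rw [hℓ]; nlinarith [norm_nonneg z]
    have hmterm : (m:ℝ)*(1-‖z‖^2)/72 ≤ (m:ℝ)*(b - a) := by
      rw [hba]
      have hm0 : (0:ℝ) ≤ (m:ℝ) := Nat.cast_nonneg m
      have : (1-‖z‖^2)/72 ≤ ℓ := by linarith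
      calc (m:ℝ)*(1-‖z‖^2)/72 = (m:ℝ)*((1-‖z‖^2)/72) := by ring
        _ ≤ (m:ℝ)*ℓ := mul_le_mul_of_nonneg_left this hm0
    have hGb : (1-γ)/72 ≤ (m:ℝ) * (b - a) + ∑ j, ∫ s in a..b, Pk (zs j) s := by
      have e1 : (1 - ‖f z‖^2)/72 ≤ (m:ℝ)*(1-‖z‖^2)/72 + ∑ j, (1 - ‖Bf (zs j) z‖^2)/72 := by
        rw [← Finset.sum_div]
        rw [hfz] at *
        have := hBsum
        linarith [hBsum]
      have e2 : (1-γ)/72 ≤ (1 - ‖f z‖^2)/72 := by nlinarith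
      linarith
    rw [min_def] at h
    split_ifs at h with hcase
    · exact le_trans hGb h
    · linarith

end
end

section
/- Let N and Q be positive integers and 0 < β < 1. Let M ≤ M' ≤ N' ≤ N'' + 1 be integers such that the block {M, …, M'−1} has at most NQ + 1 terms and the block {N', …, N''} has at most NQ + 1 terms, and let (a_n)_{n=M}^{N''} be complex numbers satisfying (Σ_{n=M'}^{N'−1} |a_n|²)^{1/2} ≥ β Σ_{n=M'}^{N'−1} |a_n|. Then (Σ_{n=M}^{N''} |a_n|²)^{1/2} ≥ β_1 Σ_{n=M}^{N''} |a_n|, where β_1 = (1/(2√3)) min{β, 1/√(NQ+1)}. -/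
open MeasureTheory Filter
open scoped Classical ENNReal Topology

noncomputable section

lemma block_cs (a : ℕ → ℂ) (s : Finset ℕ) (K : ℝ) (hK : (s.card : ℝ) ≤ K) :
    ∑ n ∈ s, ‖a n‖ ≤ Real.sqrt K * Real.sqrt (∑ n ∈ s, ‖a n‖ ^ 2) := by
  have h0 : (0:ℝ) ≤ ∑ n ∈ s, ‖a n‖ := Finset.sum_nonneg fun n _ => norm_nonneg _
  have hTnn : (0:ℝ) ≤ ∑ n ∈ s, ‖a n‖ ^ 2 := Finset.sum_nonneg fun n _ => sq_nonneg _
  have hcs : (∑ n ∈ s, ‖a n‖) ^ 2 ≤ (s.card : ℝ) * ∑ n ∈ s, ‖a n‖ ^ 2 := by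
    have := Finset.sum_mul_sq_le_sq_mul_sq s (fun _ => (1:ℝ)) (fun n => ‖a n‖)
    simpa using this
  calc ∑ n ∈ s, ‖a n‖ = Real.sqrt ((∑ n ∈ s, ‖a n‖) ^ 2) := (Real.sqrt_sq h0).symm
    _ ≤ Real.sqrt (K * ∑ n ∈ s, ‖a n‖ ^ 2) :=
        Real.sqrt_le_sqrt (hcs.trans (mul_le_mul_of_nonneg_right hK hTnn))
    _ = Real.sqrt K * Real.sqrt (∑ n ∈ s, ‖a n‖ ^ 2) :=
        Real.sqrt_mul (le_trans (by positivity) hK) _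

/-- reverse Cauchy–Schwarz inequality extends across short blocks. -/
theorem reverse_cauchy_schwarz_blocks (N Q : ℕ) (hN : 1 ≤ N) (hQ : 1 ≤ Q)
    (β : ℝ) (hβ0 : 0 < β) (hβ1 : β < 1)
    (M M' N' N'' : ℕ) (h1 : M ≤ M') (h2 : M' ≤ N') (h3 : N' ≤ N'' + 1)
    (hb1 : M' - M ≤ N * Q + 1) (hb2 : N'' + 1 - N' ≤ N * Q + 1)
    (a : ℕ → ℂ)
    (hrc : β * ∑ n ∈ Finset.Ico M' N', ‖a n‖
      ≤ Real.sqrt (∑ n ∈ Finset.Ico M' N', ‖a n‖ ^ 2)) :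
    1 / (2 * Real.sqrt 3) * min β (1 / Real.sqrt ((N : ℝ) * Q + 1))
        * ∑ n ∈ Finset.Icc M N'', ‖a n‖
      ≤ Real.sqrt (∑ n ∈ Finset.Icc M N'', ‖a n‖ ^ 2) := by
  set K : ℝ := (N : ℝ) * Q + 1 with hKdef
  have hK0 : (0:ℝ) < K := by positivity
  have hsK : (0:ℝ) < Real.sqrt K := Real.sqrt_pos.2 hK0
  set T := ∑ n ∈ Finset.Icc M N'', ‖a n‖ ^ 2 with hT
  have hTnn : 0 ≤ T := Finset.sum_nonneg fun n _ => sq_nonneg _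
  have hsT : 0 ≤ Real.sqrt T := Real.sqrt_nonneg _
  have h13 : M ≤ N'' + 1 := le_trans h1 (le_trans h2 h3)
  have h23 : M' ≤ N'' + 1 := le_trans h2 h3
  -- subset facts
  have hsub1 : Finset.Ico M M' ⊆ Finset.Icc M N'' := by
    intro n hn; simp only [Finset.mem_Ico, Finset.mem_Icc] at *; omega
  have hsub2 : Finset.Ico M' N' ⊆ Finset.Icc M N'' := by
    intro n hn; simp only [Finset.mem_Ico, Finset.mem_Icc] at *; omega
  have hsub3 : Finset.Ico N' (N'' + 1) ⊆ Finset.Icc M N'' := by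
    intro n hn; simp only [Finset.mem_Ico, Finset.mem_Icc] at *; omega
  have hTle : ∀ s : Finset ℕ, s ⊆ Finset.Icc M N'' →
      Real.sqrt (∑ n ∈ s, ‖a n‖ ^ 2) ≤ Real.sqrt T := by
    intro s hs
    exact Real.sqrt_le_sqrt (Finset.sum_le_sum_of_subset_of_nonneg hs
      (fun n _ _ => sq_nonneg _))
  -- split the sum of norms
  have hsplit : ∑ n ∈ Finset.Icc M N'', ‖a n‖
      = (∑ n ∈ Finset.Ico M M', ‖a n‖) + (∑ n ∈ Finset.Ico M' N', ‖a n‖)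
        + ∑ n ∈ Finset.Ico N' (N'' + 1), ‖a n‖ := by
    rw [← Finset.Ico_add_one_right_eq_Icc, ← Finset.sum_Ico_consecutive _ h1 h23,
      ← Finset.sum_Ico_consecutive _ h2 h3]
    ring
  set m := min β (1 / Real.sqrt K) with hm
  have hm0 : 0 < m := lt_min hβ0 (by positivity)
  have hmβ : m ≤ β := min_le_left _ _
  have hmK : m ≤ 1 / Real.sqrt K := min_le_right _ _
  -- bound each block
  have hS1nn : (0:ℝ) ≤ ∑ n ∈ Finset.Ico M M', ‖a n‖ :=
    Finset.sum_nonneg fun n _ => norm_nonneg _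
  have hS2nn : (0:ℝ) ≤ ∑ n ∈ Finset.Ico M' N', ‖a n‖ :=
    Finset.sum_nonneg fun n _ => norm_nonneg _
  have hS3nn : (0:ℝ) ≤ ∑ n ∈ Finset.Ico N' (N'' + 1), ‖a n‖ :=
    Finset.sum_nonneg fun n _ => norm_nonneg _
  have hcard1 : ((Finset.Ico M M').card : ℝ) ≤ K := by
    rw [Nat.card_Ico, hKdef]
    calc ((M' - M : ℕ) : ℝ) ≤ ((N * Q + 1 : ℕ) : ℝ) := by exact_mod_cast hb1
      _ = (N : ℝ) * Q + 1 := by push_cast; ring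
  have hcard3 : ((Finset.Ico N' (N'' + 1)).card : ℝ) ≤ K := by
    rw [Nat.card_Ico, hKdef]
    calc ((N'' + 1 - N' : ℕ) : ℝ) ≤ ((N * Q + 1 : ℕ) : ℝ) := by exact_mod_cast hb2
      _ = (N : ℝ) * Q + 1 := by push_cast; ring
  have hB1 : m * ∑ n ∈ Finset.Ico M M', ‖a n‖ ≤ Real.sqrt T := by
    have := (block_cs a (Finset.Ico M M') K hcard1).trans
      (mul_le_mul_of_nonneg_left (hTle _ hsub1) hsK.le)
    calc m * ∑ n ∈ Finset.Ico M M', ‖a n‖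
        ≤ (1 / Real.sqrt K) * (Real.sqrt K * Real.sqrt T) := by
          apply mul_le_mul hmK this hS1nn (by positivity)
      _ = Real.sqrt T := by field_simp
  have hB3 : m * ∑ n ∈ Finset.Ico N' (N'' + 1), ‖a n‖ ≤ Real.sqrt T := by
    have := (block_cs a (Finset.Ico N' (N'' + 1)) K hcard3).trans
      (mul_le_mul_of_nonneg_left (hTle _ hsub3) hsK.le)
    calc m * ∑ n ∈ Finset.Ico N' (N'' + 1), ‖a n‖
        ≤ (1 / Real.sqrt K) * (Real.sqrt K * Real.sqrt T) := by
          apply mul_le_mul hmK this hS3nn (by positivity)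
      _ = Real.sqrt T := by field_simp
  have hB2 : m * ∑ n ∈ Finset.Ico M' N', ‖a n‖ ≤ Real.sqrt T := by
    calc m * ∑ n ∈ Finset.Ico M' N', ‖a n‖
        ≤ β * ∑ n ∈ Finset.Ico M' N', ‖a n‖ :=
          mul_le_mul_of_nonneg_right hmβ hS2nn
      _ ≤ Real.sqrt (∑ n ∈ Finset.Ico M' N', ‖a n‖ ^ 2) := hrc
      _ ≤ Real.sqrt T := hTle _ hsub2
  have htot : m * ∑ n ∈ Finset.Icc M N'', ‖a n‖ ≤ 3 * Real.sqrt T := by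
    rw [hsplit]; nlinarith [hB1, hB2, hB3]
  have hs3 : Real.sqrt 3 ^ 2 = 3 := Real.sq_sqrt (by norm_num)
  have hs3pos : (0:ℝ) < Real.sqrt 3 := Real.sqrt_pos.2 (by norm_num)
  rw [mul_assoc]
  rw [div_mul_eq_mul_div, one_mul, div_le_iff₀ (by positivity)]
  nlinarith [htot, hsT, hs3pos, hs3]


end
end

section
/- Fix an integer ν ≥ 2. For a sequence (a_n) of complex numbers and integers n ≥ 0, let F_n(z) = Σ_{k=1}^{n} a_k z^{ν^k} (with F_0 ≡ 0), let 𝓕_n be the collection of ν-adic arcs {[exp(2πikν^{−(n+1)}), exp(2πi(k+1)ν^{−(n+1)})) : 0 ≤ k < ν^{n+1}}, and for ξ ∈ ∂𝔻 let M_n(ξ) = (1/m(I(ξ))) ∫_{I(ξ)} F_n(z) dm(z), where I(ξ) is the unique arc of 𝓕_n containing ξ; set ΔM_n = M_n − M_{n−1}. Then there exist constants C > 0 and 0 < c < 1, with c depending only on ν, such that for all integers N ≥ 1 and 0 ≤ m ≤ N−1, if sup_n |a_n| ≤ 1 and a_n = 0 for all N−m ≤ n ≤ N−1, then | |ΔM_N(ξ)|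 − c|a_N| | ≤ C ν^{−m} for every ξ ∈ ∂𝔻. -/
open MeasureTheory Filter
open scoped Classical ENNReal Topology

noncomputable section

/-- Partial sum `F_n(z) = ∑_{k=1}^n a_k z^{ν^k}`. -/
def Fpart (ν : ℕ) (a : ℕ → ℂ) (n : ℕ) (z : ℂ) : ℂ :=
  ∑ k ∈ Finset.Icc 1 n, a k * z ^ (ν ^ k)

/-- The parameter in `[0,1)` of a point of the unit circle. -/
def frac01 (ξ : ℂ) : ℝ := Int.fract (Complex.arg ξ / (2 * Real.pi))

/-- Index of the `ν`-adic arc of generation `n` containing `ξ`. -/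
def nuIdx (ν n : ℕ) (ξ : ℂ) : ℤ := ⌊frac01 ξ * (ν : ℝ) ^ (n + 1)⌋

/-- The martingale `M_n(ξ)`: the average of `F_n` over the `ν`-adic arc of
generation `n` containing `ξ`. -/
def Mart (ν : ℕ) (a : ℕ → ℂ) (n : ℕ) (ξ : ℂ) : ℂ :=
  ((ν : ℝ) ^ (n + 1)) •
    ∫ t in ((nuIdx ν n ξ : ℝ) / (ν : ℝ) ^ (n + 1))..(((nuIdx ν n ξ : ℝ) + 1) / (ν : ℝ) ^ (n + 1)),
      Fpart ν a n (pc t)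


namespace Aux
open Complex Real intervalIntegral

lemma pc_eq' (t : ℝ) : pc t = Complex.exp (((2*Real.pi*t : ℝ) : ℂ) * Complex.I) := by
  unfold pc; congr 1; push_cast; ring

lemma continuous_pc : Continuous pc := by
  unfold pc; fun_prop

lemma norm_pc (t : ℝ) : ‖pc t‖ = 1 := by
  rw [pc_eq', Complex.norm_exp_ofReal_mul_I]

lemma exp_I_bound1 (t : ℝ) (ht : 0 ≤ t) : ‖Complex.exp (Complex.I * t) - 1‖ ≤ t := by
  have h := integral_exp_mul_complex (a := 0) (b := t) (c := Complex.I) Complex.I_ne_zero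
  have h2 : Complex.exp (Complex.I * t) - 1 = Complex.I * ∫ x in (0:ℝ)..t, Complex.exp (Complex.I * x) := by
    rw [h]; rw [Complex.ofReal_zero, mul_zero, Complex.exp_zero]
    field_simp
  rw [h2, norm_mul, Complex.norm_I, one_mul]
  calc ‖∫ x in (0:ℝ)..t, Complex.exp (Complex.I * x)‖ ≤ 1 * |t - 0| := by
        apply intervalIntegral.norm_integral_le_of_norm_le_const
        intro x _
        rw [mul_comm, Complex.norm_exp_ofReal_mul_I]
    _ = t := by rw [sub_zero, one_mul, _root_.abs_of_nonneg ht]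

lemma exp_I_bound2 (t : ℝ) (ht : 0 ≤ t) :
    ‖Complex.exp (Complex.I * t) - 1 - Complex.I * t‖ ≤ t^2/2 := by
  have hc1 : Continuous fun x : ℝ => Complex.exp (Complex.I * x) := by fun_prop
  have key : Complex.exp (Complex.I * t) - 1 - Complex.I * t
      = Complex.I * ∫ x in (0:ℝ)..t, (Complex.exp (Complex.I * x) - 1) := by
    rw [intervalIntegral.integral_sub (hc1.intervalIntegrable _ _) intervalIntegrable_const,
      integral_exp_mul_complex Complex.I_ne_zero, intervalIntegral.integral_const]
    rw [Complex.ofReal_zero, mul_zero, Complex.exp_zero, sub_zero]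
    rw [Complex.real_smul, mul_one]
    field_simp
  rw [key, norm_mul, Complex.norm_I, one_mul]
  calc ‖∫ x in (0:ℝ)..t, (Complex.exp (Complex.I * x) - 1)‖
      ≤ ∫ x in (0:ℝ)..t, ‖Complex.exp (Complex.I * x) - 1‖ :=
        intervalIntegral.norm_integral_le_integral_norm ht
    _ ≤ ∫ x in (0:ℝ)..t, x := by
        apply intervalIntegral.integral_mono_on ht
        · exact ((hc1.sub continuous_const).norm).intervalIntegrable _ _
        · exact intervalIntegrable_id
        · intro x hx; exact exp_I_bound1 x hx.1
    _ = t^2/2 := by rw [integral_id]; ring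

end Aux

def gG (u : ℝ) : ℂ := (pc u - 1) / (2 * Real.pi * Complex.I * u)

namespace Aux
open Complex Real

lemma pc_add (s t : ℝ) : pc (s + t) = pc s * pc t := by
  unfold pc; rw [← Complex.exp_add]; congr 1; push_cast; ring

lemma pc_eqI (t : ℝ) : pc t = Complex.exp (Complex.I * ((2*Real.pi*t : ℝ) : ℂ)) := by
  unfold pc; congr 1; push_cast; ring

lemma pc_sub_one_norm {u : ℝ} (hu : 0 ≤ u) : ‖pc u - 1‖ ≤ 2*Real.pi*u := by
  rw [pc_eqI]
  exact exp_I_bound1 _ (by positivity)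

lemma pc_lip (a b : ℝ) : ‖pc a - pc b‖ ≤ 2*Real.pi*|a - b| := by
  rcases le_total b a with h | h
  · have : pc a - pc b = pc b * (pc (a - b) - 1) := by
      rw [mul_sub, mul_one, ← pc_add]; ring_nf
    rw [this, norm_mul, norm_pc, one_mul, _root_.abs_of_nonneg (by linarith)]
    exact pc_sub_one_norm (by linarith)
  · have : pc b - pc a = pc a * (pc (b - a) - 1) := by
      rw [mul_sub, mul_one, ← pc_add]; ring_nf
    rw [norm_sub_rev, this, norm_mul, norm_pc, one_mul, abs_sub_comm,
      _root_.abs_of_nonneg (by linarith)]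
    exact pc_sub_one_norm (by linarith)

lemma denom_norm (u : ℝ) (hu : 0 < u) : ‖(2 * Real.pi * Complex.I * u : ℂ)‖ = 2*Real.pi*u := by
  simp only [norm_mul, Complex.norm_I, Complex.norm_real, Real.norm_eq_abs, Complex.norm_two,
    _root_.abs_of_nonneg Real.pi_pos.le, _root_.abs_of_nonneg hu.le]
  ring

lemma gG_norm_le {u : ℝ} (hu : 0 < u) : ‖gG u‖ ≤ 1 := by
  rw [gG, norm_div, denom_norm u hu, div_le_one (by positivity)]
  exact pc_sub_one_norm hu.le

lemma gG_sub_one {u : ℝ} (hu : 0 < u) : ‖gG u - 1‖ ≤ Real.pi * u := by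
  have hd : (2 * Real.pi * Complex.I * u : ℂ) ≠ 0 := by
    simp [Real.pi_ne_zero, Complex.I_ne_zero, ne_of_gt hu]
  have : gG u - 1 = (pc u - 1 - 2 * Real.pi * Complex.I * u) / (2 * Real.pi * Complex.I * u) := by
    rw [gG, eq_div_iff hd, sub_mul, div_mul_cancel₀ _ hd, one_mul]
  rw [this, norm_div, denom_norm u hu]
  have hnum : ‖pc u - 1 - 2 * Real.pi * Complex.I * u‖ ≤ (2*Real.pi*u)^2/2 := by
    have h2 : (2 * Real.pi * Complex.I * u : ℂ) = Complex.I * ((2*Real.pi*u : ℝ) : ℂ) := by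
      push_cast; ring
    rw [pc_eqI, h2]
    exact exp_I_bound2 _ (by positivity)
  rw [div_le_iff₀ (by positivity)]
  calc ‖pc u - 1 - 2 * Real.pi * Complex.I * u‖ ≤ (2*Real.pi*u)^2/2 := hnum
    _ = Real.pi * u * (2*Real.pi*u) := by ring

lemma pc_sub_one_abs (u : ℝ) : ‖pc u - 1‖ = 2 * |Real.sin (Real.pi * u)| := by
  have h1 : pc u - 1 = ((Real.cos (2*Real.pi*u) - 1 : ℝ) : ℂ) + ((Real.sin (2*Real.pi*u) : ℝ) : ℂ) * Complex.I := by
    rw [pc_eq', Complex.exp_mul_I, ← Complex.ofReal_cos, ← Complex.ofReal_sin]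
    push_cast; ring
  rw [h1, Complex.norm_def, Complex.normSq_add_mul_I]
  have h2 : (Real.cos (2*Real.pi*u) - 1)^2 + (Real.sin (2*Real.pi*u))^2
      = (2 * Real.sin (Real.pi * u))^2 := by
    have hp := Real.sin_sq_add_cos_sq (Real.pi*u)
    have hp2 := Real.sin_sq_add_cos_sq (2*Real.pi*u)
    have hc : Real.cos (2*Real.pi*u) = 2*Real.cos (Real.pi*u)^2 - 1 := by
      rw [show 2*Real.pi*u = 2*(Real.pi*u) by ring, Real.cos_two_mul]
    nlinarith [hp, hp2, hc]
  rw [h2, Real.sqrt_sq_eq_abs, abs_mul]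
  norm_num

end Aux

namespace Aux
open Complex Real intervalIntegral

lemma key_term (M : ℕ) (hM : 1 ≤ M) (q : ℝ) (hq : 0 < q) (j : ℝ) (A : ℂ) :
    q • (A * ∫ t in (j/q)..((j+1)/q), pc t ^ M)
      = A * pc ((j/q) * (M:ℝ)) * gG ((M:ℝ)/q) := by
  have hM0 : (M:ℂ) ≠ 0 := Nat.cast_ne_zero.mpr (by omega)
  have hc : (2*(Real.pi:ℂ)*Complex.I*(M:ℂ)) ≠ 0 := by
    simp [Real.pi_ne_zero, Complex.I_ne_zero, hM0]
  have hpow : ∀ t : ℝ, pc t ^ M = Complex.exp ((2*(Real.pi:ℂ)*Complex.I*(M:ℂ)) * (t:ℂ)) := by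
    intro t
    rw [pc, ← Complex.exp_nat_mul]
    congr 1; push_cast; ring
  have hint : (∫ t in (j/q)..((j+1)/q), pc t ^ M)
      = (Complex.exp ((2*(Real.pi:ℂ)*Complex.I*(M:ℂ)) * (((j+1)/q : ℝ):ℂ))
        - Complex.exp ((2*(Real.pi:ℂ)*Complex.I*(M:ℂ)) * ((j/q : ℝ):ℂ))) / (2*(Real.pi:ℂ)*Complex.I*(M:ℂ)) := by
    simp_rw [hpow]
    exact integral_exp_mul_complex hc
  have e1 : Complex.exp ((2*(Real.pi:ℂ)*Complex.I*(M:ℂ)) * (((j+1)/q : ℝ):ℂ))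
      = pc (((j+1)/q) * (M:ℝ)) := by
    unfold pc; congr 1; push_cast; ring
  have e2 : Complex.exp ((2*(Real.pi:ℂ)*Complex.I*(M:ℂ)) * ((j/q : ℝ):ℂ))
      = pc ((j/q) * (M:ℝ)) := by
    unfold pc; congr 1; push_cast; ring
  have hsplit : pc (((j+1)/q) * (M:ℝ)) = pc ((j/q) * (M:ℝ)) * pc ((M:ℝ)/q) := by
    rw [← pc_add]; congr 1; field_simp
  rw [hint, e1, e2, hsplit, Complex.real_smul, gG]
  have hMq : (((M:ℝ)/q : ℝ) : ℂ) = (M:ℂ)/(q:ℂ) := by push_cast; ring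
  rw [hMq]
  have hq0 : (q:ℂ) ≠ 0 := Complex.ofReal_ne_zero.mpr hq.ne'
  field_simp

lemma mart_eq (ν : ℕ) (hν : 2 ≤ ν) (a : ℕ → ℂ) (n : ℕ) (ξ : ℂ) :
    Mart ν a n ξ = ∑ k ∈ Finset.Icc 1 n,
      a k * pc (((nuIdx ν n ξ : ℝ)/(ν:ℝ)^(n+1)) * (ν:ℝ)^k)
        * gG ((ν:ℝ)^k/(ν:ℝ)^(n+1)) := by
  have hq : (0:ℝ) < (ν:ℝ)^(n+1) := by positivity
  unfold Mart Fpart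
  rw [intervalIntegral.integral_finset_sum (f := fun k t => a k * pc t ^ ν ^ k) (fun k _ =>
    ((continuous_const.mul (continuous_pc.pow _)).intervalIntegrable _ _))]
  rw [Finset.smul_sum]
  apply Finset.sum_congr rfl
  intro k hk
  rw [intervalIntegral.integral_const_mul]
  have hkey := key_term (ν^k) (Nat.one_le_pow _ _ (by omega)) ((ν:ℝ)^(n+1)) hq
    ((nuIdx ν n ξ : ℤ) : ℝ) (a k)
  have hcast : ((ν^k : ℕ) : ℝ) = (ν:ℝ)^k := by push_cast; ring
  rw [hcast] at hkey
  exact hkey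


end Aux

namespace Aux
open Complex Real

lemma floor_div_bounds (x q : ℝ) (hq : 0 < q) :
    0 ≤ x - ((⌊x*q⌋ : ℤ) : ℝ)/q ∧ x - ((⌊x*q⌋ : ℤ) : ℝ)/q ≤ 1/q := by
  constructor
  · rw [sub_nonneg, div_le_iff₀ hq]
    exact Int.floor_le (x*q)
  · have h := (Int.lt_floor_add_one (x*q)).le
    rw [sub_le_iff_le_add, ← add_div, le_div_iff₀ hq]
    linarith

lemma term_est {ν : ℕ} (hν : 2 ≤ ν) (n k : ℕ) (hkn : k ≤ n) (θ x : ℝ)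
    (h1 : 0 ≤ x - θ) (h2 : x - θ ≤ 1/(ν:ℝ)^(n+1)) (A : ℂ) :
    ‖A * pc (θ * (ν:ℝ)^k) * gG ((ν:ℝ)^k/(ν:ℝ)^(n+1)) - A * pc (x * (ν:ℝ)^k)‖
      ≤ ‖A‖ * (3*Real.pi*((ν:ℝ)^k/(ν:ℝ)^(n+1))) := by
  have hν0 : (0:ℝ) < (ν:ℝ) := by exact_mod_cast (by omega : 0 < ν)
  have hu : (0:ℝ) < (ν:ℝ)^k/(ν:ℝ)^(n+1) := by positivity
  have split : A * pc (θ * (ν:ℝ)^k) * gG ((ν:ℝ)^k/(ν:ℝ)^(n+1)) - A * pc (x * (ν:ℝ)^k)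
      = A * ((pc (θ * (ν:ℝ)^k) - pc (x * (ν:ℝ)^k)) * gG ((ν:ℝ)^k/(ν:ℝ)^(n+1))
          + pc (x * (ν:ℝ)^k) * (gG ((ν:ℝ)^k/(ν:ℝ)^(n+1)) - 1)) := by ring
  rw [split, norm_mul]
  apply mul_le_mul_of_nonneg_left ?_ (norm_nonneg A)
  have habs : |θ * (ν:ℝ)^k - x * (ν:ℝ)^k| ≤ (ν:ℝ)^k/(ν:ℝ)^(n+1) := by
    rw [show θ * (ν:ℝ)^k - x * (ν:ℝ)^k = (θ - x) * (ν:ℝ)^k by ring, abs_mul,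
      abs_sub_comm, _root_.abs_of_nonneg h1, _root_.abs_of_nonneg (by positivity : (0:ℝ) ≤ (ν:ℝ)^k)]
    calc (x - θ) * (ν:ℝ)^k ≤ (1/(ν:ℝ)^(n+1)) * (ν:ℝ)^k :=
          mul_le_mul_of_nonneg_right h2 (by positivity)
      _ = (ν:ℝ)^k/(ν:ℝ)^(n+1) := by ring
  calc ‖(pc (θ * (ν:ℝ)^k) - pc (x * (ν:ℝ)^k)) * gG ((ν:ℝ)^k/(ν:ℝ)^(n+1))
        + pc (x * (ν:ℝ)^k) * (gG ((ν:ℝ)^k/(ν:ℝ)^(n+1)) - 1)‖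
      ≤ ‖pc (θ * (ν:ℝ)^k) - pc (x * (ν:ℝ)^k)‖ * ‖gG ((ν:ℝ)^k/(ν:ℝ)^(n+1))‖
        + ‖pc (x * (ν:ℝ)^k)‖ * ‖gG ((ν:ℝ)^k/(ν:ℝ)^(n+1)) - 1‖ := by
        refine (norm_add_le _ _).trans ?_
        rw [norm_mul, norm_mul]
    _ ≤ (2*Real.pi*|θ * (ν:ℝ)^k - x * (ν:ℝ)^k|) * 1
        + 1 * (Real.pi * ((ν:ℝ)^k/(ν:ℝ)^(n+1))) := by
        refine add_le_add (mul_le_mul (pc_lip _ _) (gG_norm_le hu) (norm_nonneg _) (by positivity)) ?_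
        rw [norm_pc, one_mul, one_mul]
        exact gG_sub_one hu
    _ ≤ 3*Real.pi*((ν:ℝ)^k/(ν:ℝ)^(n+1)) := by nlinarith [Real.pi_pos, habs, hu]

lemma gG_abs {u : ℝ} (hu : 0 < u) : ‖gG u‖ = |Real.sin (Real.pi*u)| / (Real.pi*u) := by
  rw [gG, norm_div, denom_norm u hu, pc_sub_one_abs,
    show (2:ℝ)*Real.pi*u = 2*(Real.pi*u) by ring, mul_div_mul_left _ _ (two_ne_zero)]

lemma c_pos {ν : ℕ} (hν : 2 ≤ ν) : 0 < ‖gG (1/(ν:ℝ))‖ := by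
  have hν0 : (0:ℝ) < (ν:ℝ) := by exact_mod_cast (by omega : 0 < ν)
  have hu : (0:ℝ) < 1/(ν:ℝ) := by positivity
  have h1 : Real.pi * (1/(ν:ℝ)) < Real.pi := by
    have hlt : 1/(ν:ℝ) < 1 := by
      rw [div_lt_one hν0]; exact_mod_cast (by omega : 1 < ν)
    nlinarith [Real.pi_pos]
  have hsin : 0 < Real.sin (Real.pi * (1/(ν:ℝ))) :=
    Real.sin_pos_of_pos_of_lt_pi (by positivity) h1
  rw [gG_abs hu]
  exact div_pos (by rwa [_root_.abs_of_nonneg hsin.le]) (by positivity)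

lemma c_lt_one {ν : ℕ} (hν : 2 ≤ ν) : ‖gG (1/(ν:ℝ))‖ < 1 := by
  have hν0 : (0:ℝ) < (ν:ℝ) := by exact_mod_cast (by omega : 0 < ν)
  have hu : (0:ℝ) < 1/(ν:ℝ) := by positivity
  have h1 : Real.pi * (1/(ν:ℝ)) < Real.pi := by
    have hlt : 1/(ν:ℝ) < 1 := by
      rw [div_lt_one hν0]; exact_mod_cast (by omega : 1 < ν)
    nlinarith [Real.pi_pos]
  have hsin : 0 < Real.sin (Real.pi * (1/(ν:ℝ))) :=
    Real.sin_pos_of_pos_of_lt_pi (by positivity) h1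
  rw [gG_abs hu, div_lt_one (by positivity), _root_.abs_of_nonneg hsin.le]
  exact Real.sin_lt (by positivity)

lemma sum_pow_le {ν : ℕ} (hν : 2 ≤ ν) (L : ℕ) :
    ∑ k ∈ Finset.Icc 1 L, (ν:ℝ)^k ≤ (ν:ℝ)^(L+1) := by
  have hν2 : (2:ℝ) ≤ (ν:ℝ) := by exact_mod_cast hν
  induction L with
  | zero => simp
  | succ L ih =>
    rw [Finset.sum_Icc_succ_top (by omega : 1 ≤ L+1)]
    have hp : (0:ℝ) < (ν:ℝ)^(L+1) := by positivity
    have : (ν:ℝ)^(L+1+1) = (ν:ℝ)*(ν:ℝ)^(L+1) := by ring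
    nlinarith [ih]

end Aux

/-- size of martingale increments in the presence of null coefficients. -/
theorem increments_with_null_coefficients (ν : ℕ) (hν : 2 ≤ ν) :
    ∃ C : ℝ, 0 < C ∧ ∃ c : ℝ, 0 < c ∧ c < 1 ∧
      ∀ a : ℕ → ℂ, ∀ N : ℕ, 1 ≤ N → ∀ m : ℕ, m ≤ N - 1 →
        (∀ n : ℕ, ‖a n‖ ≤ 1) → (∀ n : ℕ, N - m ≤ n → n ≤ N - 1 → a n = 0) →
        ∀ ξ ∈ uc,
          |‖Mart ν a N ξ - Mart ν a (N - 1) ξ‖ - c * ‖a N‖| ≤ C * (ν : ℝ) ^ (-(m : ℤ)) := by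
  have hν0 : (0:ℝ) < (ν:ℝ) := by exact_mod_cast (by omega : 0 < ν)
  refine ⟨6*Real.pi + 1, by positivity, ‖gG (1/(ν:ℝ))‖, Aux.c_pos hν, Aux.c_lt_one hν, ?_⟩
  intro a N hN m hm ha hz ξ _
  obtain ⟨n, rfl⟩ : ∃ n, N = n + 1 := ⟨N - 1, by omega⟩
  simp only [Nat.add_sub_cancel] at hm hz ⊢
  have hm' : m ≤ n := hm
  have hq1 : (0:ℝ) < (ν:ℝ)^(n+1) := pow_pos hν0 _
  have hq2 : (0:ℝ) < (ν:ℝ)^(n+1+1) := pow_pos hν0 _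
  have hb1 : 0 ≤ frac01 ξ - ((nuIdx ν n ξ : ℤ) : ℝ)/(ν:ℝ)^(n+1) ∧
      frac01 ξ - ((nuIdx ν n ξ : ℤ) : ℝ)/(ν:ℝ)^(n+1) ≤ 1/(ν:ℝ)^(n+1) :=
    Aux.floor_div_bounds (frac01 ξ) ((ν:ℝ)^(n+1)) hq1
  have hb2 : 0 ≤ frac01 ξ - ((nuIdx ν (n+1) ξ : ℤ) : ℝ)/(ν:ℝ)^(n+1+1) ∧
      frac01 ξ - ((nuIdx ν (n+1) ξ : ℤ) : ℝ)/(ν:ℝ)^(n+1+1) ≤ 1/(ν:ℝ)^(n+1+1) :=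
    Aux.floor_div_bounds (frac01 ξ) ((ν:ℝ)^(n+1+1)) hq2
  have tri : ∀ X Y H : ℂ, |‖X + H - Y‖ - ‖H‖| ≤ ‖X - Y‖ := by
    intro X Y H
    calc |‖X + H - Y‖ - ‖H‖| ≤ ‖X + H - Y - H‖ := abs_norm_sub_norm_le _ _
      _ = ‖X - Y‖ := by congr 1; ring
  rw [Aux.mart_eq ν hν a (n+1) ξ, Aux.mart_eq ν hν a n ξ,
    Finset.sum_Icc_succ_top (by omega : 1 ≤ n+1)]
  have hHnorm : ‖a (n+1) * pc (((nuIdx ν (n+1) ξ : ℤ) : ℝ)/(ν:ℝ)^(n+1+1) * (ν:ℝ)^(n+1))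
      * gG ((ν:ℝ)^(n+1)/(ν:ℝ)^(n+1+1))‖ = ‖gG (1/(ν:ℝ))‖ * ‖a (n+1)‖ := by
    have h3 : (ν:ℝ)^(n+1)/(ν:ℝ)^(n+1+1) = 1/(ν:ℝ) := by
      rw [pow_succ]
      field_simp
      ring
    rw [h3, norm_mul, norm_mul, Aux.norm_pc, mul_one]
    ring
  rw [← hHnorm]
  refine le_trans (tri _ _ _) ?_
  rw [← Finset.sum_sub_distrib]
  have hterm : ∀ k ∈ Finset.Icc 1 n,
      ‖a k * pc (((nuIdx ν (n+1) ξ : ℤ) : ℝ)/(ν:ℝ)^(n+1+1) * (ν:ℝ)^k) * gG ((ν:ℝ)^k/(ν:ℝ)^(n+1+1))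
        - a k * pc (((nuIdx ν n ξ : ℤ) : ℝ)/(ν:ℝ)^(n+1) * (ν:ℝ)^k) * gG ((ν:ℝ)^k/(ν:ℝ)^(n+1))‖
      ≤ ‖a k‖ * (6*Real.pi*((ν:ℝ)^k/(ν:ℝ)^(n+1))) := by
    intro k hk
    obtain ⟨hk1, hkn⟩ := Finset.mem_Icc.mp hk
    have e2 := Aux.term_est hν (n+1) k (by omega)
      (((nuIdx ν (n+1) ξ : ℤ) : ℝ)/(ν:ℝ)^(n+1+1)) (frac01 ξ) hb2.1 hb2.2 (a k)
    have e1 := Aux.term_est hν n k hkn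
      (((nuIdx ν n ξ : ℤ) : ℝ)/(ν:ℝ)^(n+1)) (frac01 ξ) hb1.1 hb1.2 (a k)
    have hdd : (ν:ℝ)^k/(ν:ℝ)^(n+1+1) ≤ (ν:ℝ)^k/(ν:ℝ)^(n+1) := by
      apply div_le_div_of_nonneg_left (by positivity) hq1
      exact pow_le_pow_right₀ (by exact_mod_cast (by omega : 1 ≤ ν)) (by omega)
    have h6 : 3*Real.pi*((ν:ℝ)^k/(ν:ℝ)^(n+1+1)) + 3*Real.pi*((ν:ℝ)^k/(ν:ℝ)^(n+1))
        ≤ 6*Real.pi*((ν:ℝ)^k/(ν:ℝ)^(n+1)) := by nlinarith [Real.pi_pos]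
    calc ‖a k * pc (((nuIdx ν (n+1) ξ : ℤ) : ℝ)/(ν:ℝ)^(n+1+1) * (ν:ℝ)^k) * gG ((ν:ℝ)^k/(ν:ℝ)^(n+1+1))
        - a k * pc (((nuIdx ν n ξ : ℤ) : ℝ)/(ν:ℝ)^(n+1) * (ν:ℝ)^k) * gG ((ν:ℝ)^k/(ν:ℝ)^(n+1))‖
        = ‖(a k * pc (((nuIdx ν (n+1) ξ : ℤ) : ℝ)/(ν:ℝ)^(n+1+1) * (ν:ℝ)^k) * gG ((ν:ℝ)^k/(ν:ℝ)^(n+1+1))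
            - a k * pc (frac01 ξ * (ν:ℝ)^k))
          - (a k * pc (((nuIdx ν n ξ : ℤ) : ℝ)/(ν:ℝ)^(n+1) * (ν:ℝ)^k) * gG ((ν:ℝ)^k/(ν:ℝ)^(n+1))
            - a k * pc (frac01 ξ * (ν:ℝ)^k))‖ := by congr 1; ring
      _ ≤ ‖a k‖ * (3*Real.pi*((ν:ℝ)^k/(ν:ℝ)^(n+1+1))) + ‖a k‖ * (3*Real.pi*((ν:ℝ)^k/(ν:ℝ)^(n+1))) :=
          (norm_sub_le _ _).trans (add_le_add e2 e1)
      _ = ‖a k‖ * (3*Real.pi*((ν:ℝ)^k/(ν:ℝ)^(n+1+1)) + 3*Real.pi*((ν:ℝ)^k/(ν:ℝ)^(n+1))) := by ring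
      _ ≤ ‖a k‖ * (6*Real.pi*((ν:ℝ)^k/(ν:ℝ)^(n+1))) := mul_le_mul_of_nonneg_left h6 (norm_nonneg _)
  refine le_trans (norm_sum_le _ _) ?_
  refine le_trans (Finset.sum_le_sum hterm) ?_
  have hzero : ∑ k ∈ Finset.Icc 1 n, ‖a k‖ * (6*Real.pi*((ν:ℝ)^k/(ν:ℝ)^(n+1)))
      = ∑ k ∈ Finset.Icc 1 (n-m), ‖a k‖ * (6*Real.pi*((ν:ℝ)^k/(ν:ℝ)^(n+1))) := by
    symm
    apply Finset.sum_subset (Finset.Icc_subset_Icc_right (by omega))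
    intro k hk hk'
    rw [Finset.mem_Icc] at hk hk'
    push_neg at hk'
    have hak : a k = 0 := hz k (by omega) (by omega)
    simp [hak]
  rw [hzero]
  have hstep : ∑ k ∈ Finset.Icc 1 (n-m), ‖a k‖ * (6*Real.pi*((ν:ℝ)^k/(ν:ℝ)^(n+1)))
      ≤ (6*Real.pi/(ν:ℝ)^(n+1)) * ∑ k ∈ Finset.Icc 1 (n-m), (ν:ℝ)^k := by
    rw [Finset.mul_sum]
    apply Finset.sum_le_sum
    intro k hk
    calc ‖a k‖ * (6*Real.pi*((ν:ℝ)^k/(ν:ℝ)^(n+1)))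
        ≤ 1 * (6*Real.pi*((ν:ℝ)^k/(ν:ℝ)^(n+1))) :=
          mul_le_mul_of_nonneg_right (ha k) (by positivity)
      _ = 6*Real.pi/(ν:ℝ)^(n+1) * (ν:ℝ)^k := by ring
  refine le_trans hstep ?_
  refine le_trans (mul_le_mul_of_nonneg_left (Aux.sum_pow_le hν (n-m)) (by positivity)) ?_
  have hsplitpow : (ν:ℝ)^(n+1) = (ν:ℝ)^(n-m+1) * (ν:ℝ)^m := by
    rw [← pow_add]; congr 1; omega
  have hfin : 6*Real.pi/(ν:ℝ)^(n+1) * (ν:ℝ)^(n-m+1) = 6*Real.pi * ((ν:ℝ)^m)⁻¹ := by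
    rw [hsplitpow]
    have h1 : ((ν:ℝ)^(n-m+1)) ≠ 0 := by positivity
    have h2 : ((ν:ℝ)^m) ≠ 0 := by positivity
    field_simp
  rw [hfin, zpow_neg, zpow_natCast]
  have : (0:ℝ) ≤ ((ν:ℝ)^m)⁻¹ := by positivity
  nlinarith [Real.pi_pos]

end
end
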